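/- arXiv:2308.11460 — 3 statements merged into one kernel-verified Lean document; each statement's English description precedes it below -/
import Mathlib

section
/- Let $a_1 \geq a_2 \geq \cdots \geq a_n \geq 0$ and $b_1,\ldots,b_n,c_1,\ldots,c_n$ be nonnegative real numbers. Assume there exists at least one index $i$ with $c_i \neq 0$, and let $i_0$ be the smallest such index. Then $\sum_{i=1}^n a_i b_i \geq \left(\min_{i_0 \leq j \leq n} \frac{\sum_{i=1}^j b_i}{\sum_{i=1}^j c_i}\right) \sum_{i=1}^n a_i c_i$. -/
open Finset

/-- Generalized Chebyshev inequality (Lemma 3.1 of the paper). -/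
theorem generalized_chebyshev (n : ℕ) (a b c : ℕ → ℝ)
    (ha : ∀ i j, 1 ≤ i → i ≤ j → j ≤ n → a j ≤ a i)
    (ha0 : ∀ i ∈ Icc 1 n, 0 ≤ a i)
    (hb : ∀ i ∈ Icc 1 n, 0 ≤ b i)
    (hc : ∀ i ∈ Icc 1 n, 0 ≤ c i)
    (i0 : ℕ) (hi01 : 1 ≤ i0) (hi0n : i0 ≤ n)
    (hci0 : c i0 ≠ 0)
    (hmin : ∀ i, 1 ≤ i → i < i0 → c i = 0) :
    ∑ i ∈ Icc 1 n, a i * b i ≥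
      ((Icc i0 n).inf' (Finset.nonempty_Icc.mpr hi0n)
          (fun j => (∑ i ∈ Icc 1 j, b i) / (∑ i ∈ Icc 1 j, c i))) *
        ∑ i ∈ Icc 1 n, a i * c i := by
  set M := (Icc i0 n).inf' (Finset.nonempty_Icc.mpr hi0n)
      (fun j => (∑ i ∈ Icc 1 j, b i) / (∑ i ∈ Icc 1 j, c i)) with hM
  have hn1 : 1 ≤ n := hi01.trans hi0n
  have reind : ∀ (h : ℕ → ℝ) (k : ℕ),
      ∑ i ∈ Icc 1 k, h i = ∑ i ∈ range k, h (i + 1) := by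
    intro h k
    rw [← Finset.Ico_add_one_right_eq_Icc, Finset.sum_Ico_eq_sum_range]
    simp [add_comm]
  have hB : ∀ k, 1 ≤ k → k ≤ n → 0 ≤ ∑ i ∈ Icc 1 k, (b i - M * c i) := by
    intro k hk1 hkn
    rcases lt_or_ge k i0 with h | h
    · have e : ∀ i ∈ Icc 1 k, b i - M * c i = b i := by
        intro i hi
        obtain ⟨h1, h2⟩ := mem_Icc.mp hi
        rw [hmin i h1 (lt_of_le_of_lt h2 h), mul_zero, sub_zero]
      rw [Finset.sum_congr rfl e]
      exact Finset.sum_nonneg fun i hi =>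
        hb i (mem_Icc.mpr ⟨(mem_Icc.mp hi).1, (mem_Icc.mp hi).2.trans hkn⟩)
    · have hi0k : i0 ∈ Icc 1 k := mem_Icc.mpr ⟨hi01, h⟩
      have hcpos : 0 < ∑ i ∈ Icc 1 k, c i := by
        have h1 : 0 < c i0 :=
          lt_of_le_of_ne (hc i0 (mem_Icc.mpr ⟨hi01, hi0n⟩)) (Ne.symm hci0)
        have h2 := Finset.single_le_sum (f := c)
          (fun i hi => hc i (mem_Icc.mpr ⟨(mem_Icc.mp hi).1, (mem_Icc.mp hi).2.trans hkn⟩)) hi0k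
        linarith
      have hle : M ≤ (∑ i ∈ Icc 1 k, b i) / (∑ i ∈ Icc 1 k, c i) :=
        Finset.inf'_le _ (mem_Icc.mpr ⟨h, hkn⟩)
      have h2 : M * ∑ i ∈ Icc 1 k, c i ≤ ∑ i ∈ Icc 1 k, b i :=
        (le_div_iff₀ hcpos).mp hle
      rw [Finset.sum_sub_distrib, ← Finset.mul_sum]
      linarith
  have key : 0 ≤ ∑ i ∈ Icc 1 n, a i * (b i - M * c i) := by
    rw [reind]
    have abel := Finset.sum_range_by_parts (fun i => a (i + 1))
      (fun i => b (i + 1) - M * c (i + 1)) n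
    simp only [smul_eq_mul] at abel
    rw [abel]
    have hBn : 0 ≤ ∑ i ∈ range n, (b (i + 1) - M * c (i + 1)) := by
      have := hB n hn1 le_rfl
      rwa [reind (fun i => b i - M * c i)] at this
    have han : 0 ≤ a (n - 1 + 1) := by
      rw [Nat.sub_add_cancel hn1]
      exact ha0 n (mem_Icc.mpr ⟨hn1, le_rfl⟩)
    have hsum : ∑ i ∈ range (n - 1),
        (a (i + 1 + 1) - a (i + 1)) * ∑ j ∈ range (i + 1), (b (j + 1) - M * c (j + 1)) ≤ 0 := by
      apply Finset.sum_nonpos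
      intro i hi
      have hi' : i < n - 1 := mem_range.mp hi
      have hin : i + 2 ≤ n := by omega
      have hmono : a (i + 1 + 1) ≤ a (i + 1) := ha (i + 1) (i + 2) (by omega) (by omega) hin
      have hBpos : 0 ≤ ∑ j ∈ range (i + 1), (b (j + 1) - M * c (j + 1)) := by
        have := hB (i + 1) (by omega) (by omega)
        rwa [reind (fun i => b i - M * c i)] at this
      exact mul_nonpos_of_nonpos_of_nonneg (by linarith) hBpos
    nlinarith [mul_nonneg han hBn]
  have expand : ∑ i ∈ Icc 1 n, a i * (b i - M * c i)
      = (∑ i ∈ Icc 1 n, a i * b i) - M * ∑ i ∈ Icc 1 n, a i * c i := by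
    rw [Finset.mul_sum, ← Finset.sum_sub_distrib]
    exact Finset.sum_congr rfl fun i _ => by ring
  rw [expand] at key
  linarith
end

section
/- Let $a_1 \geq \cdots \geq a_n \geq 0$, let $c_1,\ldots,c_n$ be positive reals and $b_1,\ldots,b_n$ nonnegative reals with $\frac{b_1}{c_1} \geq \cdots \geq \frac{b_n}{c_n}$. Then $\sum_{i=1}^n a_i b_i \geq \frac{\sum_{i=1}^n b_i}{\sum_{i=1}^n c_i} \sum_{i=1}^n a_i c_i$. -/
open Finset

/-- Jensen's weighted Chebyshev-type inequality. -/
theorem jensen_weighted_chebyshev (n : ℕ) (a b c : ℕ → ℝ)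
    (ha : ∀ i j, 1 ≤ i → i ≤ j → j ≤ n → a j ≤ a i)
    (ha0 : ∀ i ∈ Icc 1 n, 0 ≤ a i)
    (hc : ∀ i ∈ Icc 1 n, 0 < c i)
    (hb : ∀ i ∈ Icc 1 n, 0 ≤ b i)
    (hratio : ∀ i j, 1 ≤ i → i ≤ j → j ≤ n → b j / c j ≤ b i / c i) :
    ∑ i ∈ Icc 1 n, a i * b i ≥
      ((∑ i ∈ Icc 1 n, b i) / (∑ i ∈ Icc 1 n, c i)) * ∑ i ∈ Icc 1 n, a i * c i := by
  rcases Nat.eq_zero_or_pos n with h0 | h0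
  · subst h0; simp
  have hcs : 0 < ∑ i ∈ Icc 1 n, c i :=
    Finset.sum_pos hc ⟨1, by simp [mem_Icc]; omega⟩
  have hterm : ∀ i ∈ Icc 1 n, ∀ j ∈ Icc 1 n,
      0 ≤ (a i - a j) * (b i * c j - b j * c i) := by
    intro i hi j hj
    simp only [mem_Icc] at hi hj
    have hci := hc i (by simp [mem_Icc]; exact hi)
    have hcj := hc j (by simp [mem_Icc]; exact hj)
    rcases le_total i j with hij | hij
    · have h1 : a j ≤ a i := ha i j hi.1 hij hj.2
      have h2 : b j * c i ≤ b i * c j := by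
        have := hratio i j hi.1 hij hj.2
        rw [div_le_div_iff₀ hcj hci] at this
        linarith
      nlinarith
    · have h1 : a i ≤ a j := ha j i hj.1 hij hi.2
      have h2 : b i * c j ≤ b j * c i := by
        have := hratio j i hj.1 hij hi.2
        rw [div_le_div_iff₀ hci hcj] at this
        linarith
      nlinarith
  have H : 0 ≤ ∑ i ∈ Icc 1 n, ∑ j ∈ Icc 1 n, (a i - a j) * (b i * c j - b j * c i) :=
    Finset.sum_nonneg fun i hi => Finset.sum_nonneg fun j hj => hterm i hi j hj
  have inner : ∀ i, ∑ j ∈ Icc 1 n, (a i - a j) * (b i * c j - b j * c i)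
      = a i * b i * (∑ j ∈ Icc 1 n, c j) - a i * c i * (∑ j ∈ Icc 1 n, b j)
        - b i * (∑ j ∈ Icc 1 n, a j * c j) + c i * (∑ j ∈ Icc 1 n, a j * b j) := by
    intro i
    simp only [Finset.mul_sum, ← Finset.sum_sub_distrib, ← Finset.sum_add_distrib]
    exact Finset.sum_congr rfl fun j _ => by ring
  have expand : ∑ i ∈ Icc 1 n, ∑ j ∈ Icc 1 n, (a i - a j) * (b i * c j - b j * c i)
      = 2 * ((∑ i ∈ Icc 1 n, a i * b i) * (∑ i ∈ Icc 1 n, c i)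
        - (∑ i ∈ Icc 1 n, b i) * (∑ i ∈ Icc 1 n, a i * c i)) := by
    rw [Finset.sum_congr rfl fun i _ => inner i]
    simp only [Finset.sum_add_distrib, Finset.sum_sub_distrib, ← Finset.sum_mul]
    ring
  have key : (∑ i ∈ Icc 1 n, b i) * (∑ i ∈ Icc 1 n, a i * c i)
      ≤ (∑ i ∈ Icc 1 n, a i * b i) * (∑ i ∈ Icc 1 n, c i) := by
    rw [expand] at H; linarith
  rw [ge_iff_le, div_mul_eq_mul_div, div_le_iff₀ hcs]
  linarith
end

section
/- Let $m \geq n \geq 1$ be integers, and let $a, d$ be real numbers with $0 \leq a < \frac{2m-n+1}{2}$ and $d < \frac{n+1}{2}$, $d \leq n$, $d \geq 0$, and suppose $\sigma := \frac{n+1-d}{2m-n+1-a} > \frac{n+1}{2m-n+1}$. Then $a + \frac{n+1}{\sigma} < \frac{3}{2}(2m-n+1)$. -/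
theorem nochka_key_estimate (n m : ℤ) (hn : 1 ≤ n) (hm : n ≤ m)
    (a d : ℝ) (ha0 : 0 ≤ a) (ha : a < (2 * (m : ℝ) - (n : ℝ) + 1) / 2)
    (hd0 : 0 ≤ d) (hd : d < ((n : ℝ) + 1) / 2) (hdn : d ≤ (n : ℝ))
    (σ : ℝ) (hσdef : σ = ((n : ℝ) + 1 - d) / (2 * (m : ℝ) - (n : ℝ) + 1 - a))
    (hσ : σ > ((n : ℝ) + 1) / (2 * (m : ℝ) - (n : ℝ) + 1)) :
    a + ((n : ℝ) + 1) / σ < (3 / 2) * (2 * (m : ℝ) - (n : ℝ) + 1) := by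
  have hn' : (1 : ℝ) ≤ (n : ℝ) := by exact_mod_cast hn
  have hm' : (n : ℝ) ≤ (m : ℝ) := by exact_mod_cast hm
  have hM : (0 : ℝ) < 2 * (m : ℝ) - (n : ℝ) + 1 := by linarith
  have hMa : (0 : ℝ) < 2 * (m : ℝ) - (n : ℝ) + 1 - a := by linarith
  have hNd : (0 : ℝ) < (n : ℝ) + 1 - d := by linarith
  have hσ' : ((n : ℝ) + 1) / (2 * (m : ℝ) - (n : ℝ) + 1) <
      ((n : ℝ) + 1 - d) / (2 * (m : ℝ) - (n : ℝ) + 1 - a) := hσdef ▸ hσ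
  rw [div_lt_div_iff₀ hM hMa] at hσ'
  have key : (2 * (m : ℝ) - (n : ℝ) + 1) * d < ((n : ℝ) + 1) * a := by nlinarith
  have hσpos : 0 < σ := hσdef ▸ div_pos hNd hMa
  rw [hσdef, div_div_eq_mul_div]
  have h2 : ((n : ℝ) + 1) * (2 * (m : ℝ) - (n : ℝ) + 1 - a) / ((n : ℝ) + 1 - d)
      < (3 / 2) * (2 * (m : ℝ) - (n : ℝ) + 1) - a := by
    rw [div_lt_iff₀ hNd]; nlinarith
  linarith
end
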